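/- In the symmetric model with ν(0) > 0, for every m ≥ 2 and t < T, the concentration of particles with no arms is c_t(0,m) = (1/(m(m-1)))·(1+1/t)^{1-m}·ν^{*m}(m-2), obtained by integrating dc_t(0,m)/dt = (1/2)Σ_{m'=1}^{m-1} c_t(1,m')c_t(1,m-m') with c_0(0,m)=0, where c_t(1,m) = t^{m-1}(1+t)^{-m} m^{-1}ν^{*m}(m-1). -/

import Mathlib

/-- Convolution of two sequences. -/
def conv (f g : ℕ → ℝ) (n : ℕ) : ℝ := ∑ k ∈ Finset.range (n + 1), f k * g (n - k)

/-- `convPow f m` is the `m`-th convolution power of `f` (with `convPow f 0 = δ_0`). -/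
def convPow (f : ℕ → ℝ) : ℕ → ℕ → ℝ
  | 0, n => if n = 0 then 1 else 0
  | m + 1, n => conv f (convPow f m) n

/-!
With `a j = ν^{*j}(j - 1) / j` we have `c1 s j = s ^ (j - 1) (1 + s) ^ (-j) a j`, so the integrand
is `s ^ (m - 2) (1 + s) ^ (-m)` times `½ ∑ a j a (m - j)`. By Lagrange inversion this sum is
`ν^{*m}(m - 2) / m`, and the remaining integral is elementary.

The Lagrange-inversion identity is read off a random walk with step `k - 1` of weight `ν k`: by the
hitting time theorem, `(p / n) ν^{*n}(n - p)` is the weight of the paths from `p` that first reach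
`0` at time `n`, and a first passage from `2` is a first passage from `2` to `1` followed by one
from `1` to `0`.
-/

open Finset PowerSeries

theorem convPow_eq_coeff_pow (f : ℕ → ℝ) (m n : ℕ) : convPow f m n = coeff n (mk f ^ m) := by
  induction m generalizing n with
  | zero => simp [convPow, coeff_one]
  | succ m ih =>
    rw [pow_succ', coeff_mul, Nat.sum_antidiagonal_eq_sum_range_succ_mk]
    simp [convPow, conv, ih, coeff_mk]

/-- Coefficientwise form of `(F ^ (m + 1))' = (m + 1) F' F ^ m` for `F = ∑ f n X ^ n`. -/
theorem natCast_mul_convPow_succ (f : ℕ → ℝ) (m n : ℕ) :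
    n * convPow f (m + 1) n = (m + 1) * ∑ k ∈ range (n + 1), k * f k * convPow f m (n - k) := by
  obtain _ | n := n
  · simp
  have hderiv : derivative ℝ (mk f ^ (m + 1)) = (m + 1 : ℝ) • (derivative ℝ (mk f) * mk f ^ m) := by
    rw [Derivation.leibniz_pow, Nat.add_sub_cancel, smul_eq_mul, ← Nat.cast_smul_eq_nsmul ℝ,
      mul_comm]
    push_cast
    rfl
  have hcoeff := congrArg (coeff n) hderiv
  rw [coeff_derivative, ← convPow_eq_coeff_pow, coeff_smul, coeff_mul,
    Nat.sum_antidiagonal_eq_sum_range_succ_mk] at hcoeff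
  rw [sum_range_succ', Nat.cast_zero, zero_mul, zero_mul, add_zero]
  push_cast
  rw [mul_comm, hcoeff, smul_eq_mul]
  congr 1
  refine sum_congr rfl fun k hk => ?_
  rw [coeff_derivative, coeff_mk, ← convPow_eq_coeff_pow]
  push_cast
  ring

/-- `firstPassage f p m` is the total weight of the paths of the walk on `ℕ` that jumps from
`h` to `h + k - 1` with weight `f k`, start at height `p` and reach `0` for the first time at
time `m`. -/
def firstPassage (f : ℕ → ℝ) : ℕ → ℕ → ℝ
  | p, 0 => if p = 0 then 1 else 0
  | 0, _ + 1 => 0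
  | p + 1, m + 1 => ∑ k ∈ range (m + 1), f k * firstPassage f (p + k) m

theorem firstPassage_eq_zero_of_lt (f : ℕ → ℝ) {m p : ℕ} (h : m < p) : firstPassage f p m = 0 := by
  induction m generalizing p with
  | zero => obtain _ | p := p <;> simp_all [firstPassage]
  | succ m ih =>
    obtain _ | p := p
    · omega
    exact sum_eq_zero fun k _ => by rw [ih (by omega), mul_zero]

theorem firstPassage_succ_succ (f : ℕ → ℝ) {p m N : ℕ} (hN : m + 1 ≤ p + N) :
    firstPassage f (p + 1) (m + 1) = ∑ k ∈ range N, f k * firstPassage f (p + k) m := by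
  have hvanish : ∀ k ≥ m + 1 - p, f k * firstPassage f (p + k) m = 0 := fun k hk => by
    rw [firstPassage_eq_zero_of_lt f (by omega), mul_zero]
  rw [firstPassage, eventually_constant_sum hvanish (n := m + 1) (by omega),
    eventually_constant_sum hvanish (n := N) (by omega)]

/-- The hitting time theorem. -/
theorem firstPassage_eq_div_mul_convPow (f : ℕ → ℝ) {m p : ℕ} (hm : 1 ≤ m) (hp : p ≤ m) :
    firstPassage f p m = p / m * convPow f m (m - p) := by
  induction m, hm using Nat.le_induction generalizing p with
  | base => interval_cases p <;> simp [firstPassage, convPow, conv]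
  | succ m hm ih =>
    obtain _ | p := p
    · simp [firstPassage]
    obtain ⟨n, rfl⟩ : ∃ n, m = p + n := ⟨m - p, by omega⟩
    have hweighted : ∑ k ∈ range (n + 1), k * f k * convPow f (p + n) (n - k)
        = n / (p + n + 1) * convPow f (p + n + 1) n := by
      have := natCast_mul_convPow_succ f (p + n) n
      push_cast at this
      field_simp
      linarith
    have hpn : (p + n : ℝ) ≠ 0 := by exact_mod_cast (by omega : p + n ≠ 0)
    calc firstPassage f (p + 1) (p + n + 1)
        = ∑ k ∈ range (n + 1), f k * firstPassage f (p + k) (p + n) :=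
          firstPassage_succ_succ f (by omega)
      _ = (p * ∑ k ∈ range (n + 1), f k * convPow f (p + n) (n - k)
            + ∑ k ∈ range (n + 1), k * f k * convPow f (p + n) (n - k)) / (p + n) := by
          rw [mul_sum, ← sum_add_distrib, sum_div]
          refine sum_congr rfl fun k hk => ?_
          rw [ih (by simp at hk; omega), show p + n - (p + k) = n - k by omega]
          push_cast
          ring
      _ = (p + 1) / (p + n + 1) * convPow f (p + n + 1) n := by
          rw [hweighted]
          change (p * convPow f (p + n + 1) n + _) / _ = _
          field_simp
          ring
      _ = _ := by push_cast; rw [Nat.add_sub_cancel_left]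

/-- A first passage from `p + q` to `0` splits at the first visit to `q`. -/
theorem sum_range_firstPassage_mul (f : ℕ → ℝ) (p q m : ℕ) :
    ∑ j ∈ range (m + 1), firstPassage f p j * firstPassage f q (m - j)
      = firstPassage f (p + q) m := by
  induction m generalizing p with
  | zero => obtain _ | p := p <;> simp [firstPassage]
  | succ m ih =>
    obtain _ | p := p
    · rw [sum_range_succ', sum_eq_zero fun j _ => by simp [firstPassage]]
      simp [firstPassage]
    have hsplit : ∀ i ∈ range (m + 1),
        firstPassage f (p + 1) (i + 1) * firstPassage f q (m - i)
          = ∑ k ∈ range (m + 2), f k * (firstPassage f (p + k) i * firstPassage f q (m - i)) := by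
      intro i hi
      rw [firstPassage_succ_succ f (N := m + 2) (by simp at hi; omega), sum_mul]
      exact sum_congr rfl fun k _ => by ring
    rw [sum_range_succ', firstPassage, if_neg (Nat.succ_ne_zero p), zero_mul, add_zero]
    simp only [Nat.add_sub_add_right]
    rw [sum_congr rfl hsplit, sum_comm, show p + 1 + q = p + q + 1 by omega,
      firstPassage_succ_succ f (N := m + 2) (by omega)]
    refine sum_congr rfl fun k _ => ?_
    rw [← mul_sum, ih, add_right_comm]

theorem firstPassage_one (f : ℕ → ℝ) (m : ℕ) :
    firstPassage f 1 m = (m : ℝ)⁻¹ * convPow f m (m - 1) := by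
  obtain _ | m := m
  · simp [firstPassage]
  rw [firstPassage_eq_div_mul_convPow f (by omega) (by omega)]
  ring

theorem sum_Ico_convPow_mul_convPow (f : ℕ → ℝ) {m : ℕ} (hm : 2 ≤ m) :
    ∑ j ∈ Ico 1 m, ((j : ℝ)⁻¹ * convPow f j (j - 1)) *
        (((m - j : ℕ) : ℝ)⁻¹ * convPow f (m - j) (m - j - 1))
      = 2 / m * convPow f m (m - 2) := by
  have hboundary : ∀ j ∈ range (m + 1), j ∉ Ico 1 m →
      firstPassage f 1 j * firstPassage f 1 (m - j) = 0 := by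
    intro j hj hj'
    simp only [mem_range, mem_Ico, not_and_or, not_le, not_lt] at hj hj'
    rcases hj' with h | h
    · rw [Nat.lt_one_iff.1 h, firstPassage, if_neg one_ne_zero, zero_mul]
    · rw [show m - j = 0 by omega, firstPassage, if_neg one_ne_zero, mul_zero]
  simp only [← firstPassage_one]
  rw [sum_subset (fun j hj => by simp at hj ⊢; omega) hboundary, sum_range_firstPassage_mul,
    firstPassage_eq_div_mul_convPow f (by omega) hm]
  norm_num

/-- `(s / (1 + s)) ^ (k + 1) / (k + 1)` is an antiderivative, since `(s / (1 + s))' = (1 + s)⁻²`. -/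
theorem integral_pow_mul_inv_one_add_pow (k : ℕ) {t : ℝ} (ht : -1 < t) :
    ∫ s in (0 : ℝ)..t, s ^ k * ((1 + s) ^ (k + 2))⁻¹ = (t / (1 + t)) ^ (k + 1) / (k + 1) := by
  have hpos : ∀ s ∈ Set.uIcc 0 t, 0 < 1 + s := fun s hs => by
    rcases Set.mem_uIcc.1 hs with h | h <;> linarith [h.1]
  have hderiv : ∀ s ∈ Set.uIcc 0 t,
      HasDerivAt (fun x : ℝ => (x / (1 + x)) ^ (k + 1) / (k + 1))
        (s ^ k * ((1 + s) ^ (k + 2))⁻¹) s := by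
    intro s hs
    have hs := (hpos s hs).ne'
    have hquot : HasDerivAt (fun x : ℝ => x / (1 + x)) (1 / (1 + s) ^ 2) s := by
      refine ((hasDerivAt_id' s).div ((hasDerivAt_id' s).const_add 1) hs).congr_deriv ?_
      ring
    refine ((hquot.fun_pow (k + 1)).div_const ((k : ℝ) + 1)).congr_deriv ?_
    rw [div_pow]
    field_simp
    push_cast
    ring
  have hint : IntervalIntegrable (fun s : ℝ => s ^ k * ((1 + s) ^ (k + 2))⁻¹)
      MeasureTheory.volume 0 t :=
    ContinuousOn.intervalIntegrable <| (continuousOn_pow k).mul <|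
      ContinuousOn.inv₀ (by fun_prop) fun s hs => (pow_pos (hpos s hs) _).ne'
  rw [intervalIntegral.integral_eq_sub_of_hasDerivAt hderiv hint]
  simp

theorem stmt_16_general (ν : ℕ → ℝ)
    (M : ℝ)
    (c1 : ℝ → ℕ → ℝ)
    (hc1 : ∀ t : ℝ, ∀ m : ℕ, 1 ≤ m →
      c1 t m = t ^ (m - 1) * ((1 + t) ^ m)⁻¹ * (m : ℝ)⁻¹ * convPow ν m (m - 1)) :
    ∀ m : ℕ, 2 ≤ m → ∀ t : ℝ, 0 < t → (1 < M → t < 1 / (M - 1)) →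
      (1 / ((m : ℝ) * ((m : ℝ) - 1))) * ((1 + 1 / t) ^ (m - 1))⁻¹ *
          convPow ν m (m - 2) =
        ∫ s in (0 : ℝ)..t,
          (1 / 2) * ∑ m' ∈ Finset.Ico 1 m, c1 s m' * c1 s (m - m') := by
  intro m hm t ht _
  obtain ⟨k, rfl⟩ : ∃ k, m = k + 2 := ⟨m - 2, by omega⟩
  have hrate : ∀ s : ℝ, (1 / 2) * ∑ j ∈ Ico 1 (k + 2), c1 s j * c1 s (k + 2 - j)
      = ((k + 2 : ℝ)⁻¹ * convPow ν (k + 2) k) * (s ^ k * ((1 + s) ^ (k + 2))⁻¹) := by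
    intro s
    have hfactor : ∀ j ∈ Ico 1 (k + 2), c1 s j * c1 s (k + 2 - j)
        = s ^ k * ((1 + s) ^ (k + 2))⁻¹ * (((j : ℝ)⁻¹ * convPow ν j (j - 1)) *
            (((k + 2 - j : ℕ) : ℝ)⁻¹ * convPow ν (k + 2 - j) (k + 2 - j - 1))) := by
      intro j hj
      obtain ⟨i, hi⟩ : ∃ i, k + 2 - j = i + 1 := ⟨k + 1 - j, by simp at hj; omega⟩
      obtain ⟨l, rfl⟩ : ∃ l, j = l + 1 := ⟨j - 1, by simp at hj; omega⟩
      have hk : k = l + i := by omega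
      rw [hc1 s _ (by omega), hc1 s _ (by omega), hi, hk]
      simp only [Nat.add_sub_cancel, ← inv_pow]
      ring
    rw [sum_congr rfl hfactor, ← mul_sum, sum_Ico_convPow_mul_convPow ν (by omega)]
    push_cast
    ring
  have hratio : (1 + 1 / t)⁻¹ = t / (1 + t) := by field_simp; ring
  rw [intervalIntegral.integral_congr fun s _ => hrate s, intervalIntegral.integral_const_mul,
    integral_pow_mul_inv_one_add_pow k (by linarith), ← inv_pow, hratio,
    show ((k + 2 : ℕ) : ℝ) - 1 = k + 1 by push_cast; ring]
  push_cast
  field_simp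

theorem stmt_16 (ν : ℕ → ℝ) (hnn : ∀ a, 0 ≤ ν a) (hprob : ∑' a : ℕ, ν a = 1)
    (hν0 : 0 < ν 0)
    (M : ℝ) (hsummean : Summable fun a : ℕ => (a : ℝ) * ν a)
    (hM : M = ∑' a : ℕ, (a : ℝ) * ν a)
    (c1 : ℝ → ℕ → ℝ)
    (hc1 : ∀ t : ℝ, ∀ m : ℕ, 1 ≤ m →
      c1 t m = t ^ (m - 1) * ((1 + t) ^ m)⁻¹ * (m : ℝ)⁻¹ * convPow ν m (m - 1)) :
    ∀ m : ℕ, 2 ≤ m → ∀ t : ℝ, 0 < t → (1 < M → t < 1 / (M - 1)) →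
      (1 / ((m : ℝ) * ((m : ℝ) - 1))) * ((1 + 1 / t) ^ (m - 1))⁻¹ *
          convPow ν m (m - 2) =
        ∫ s in (0 : ℝ)..t,
          (1 / 2) * ∑ m' ∈ Finset.Ico 1 m, c1 s m' * c1 s (m - m') :=
  stmt_16_general ν M c1 hc1
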